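/- For any group G, the subgroup M₀(G) of G ∧ G generated by all elements x ∧ y with xy = yx is an abelian subgroup contained in the center of G ∧ G, and its exponent divides exp(G) when G is finite. -/

import Mathlib

/-- Defining relations of the nonabelian tensor square `G ⊗ G`
(conjugation actions, left convention `ᵍx = g x g⁻¹`). -/
def tensorRels (G : Type*) [Group G] : Set (FreeGroup (G × G)) :=
  { r | (∃ g g' h : G, r = FreeGroup.of (g * g', h) *
          (FreeGroup.of (g * g' * g⁻¹, g * h * g⁻¹) * FreeGroup.of (g, h))⁻¹) ∨
        (∃ g h h' : G, r = FreeGroup.of (g, h * h') *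
          (FreeGroup.of (g, h) * FreeGroup.of (h * g * h⁻¹, h * h' * h⁻¹))⁻¹) }

/-- The nonabelian tensor square `G ⊗ G`. -/
def TensorSquare (G : Type*) [Group G] := PresentedGroup (tensorRels G)

instance (G : Type*) [Group G] : Group (TensorSquare G) := by
  unfold TensorSquare; infer_instance

/-- The generator `g ⊗ h` of `G ⊗ G`. -/
def tensorOf {G : Type*} [Group G] (g h : G) : TensorSquare G := PresentedGroup.of (g, h)

/-- The set of elements `x ⊗ x` generating `∇(G)`. -/
def nablaSet (G : Type*) [Group G] : Set (TensorSquare G) := { t | ∃ x : G, t = tensorOf x x }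

/-- The exterior square `G ∧ G = (G ⊗ G)/∇(G)`. -/
def ExtSquare (G : Type*) [Group G] :=
  TensorSquare G ⧸ Subgroup.normalClosure (nablaSet G)

instance (G : Type*) [Group G] : Group (ExtSquare G) := by
  unfold ExtSquare; infer_instance

/-- The element `g ∧ h` of `G ∧ G`. -/
def wedge {G : Type*} [Group G] (g h : G) : ExtSquare G := QuotientGroup.mk (tensorOf g h)

/-- `M₀(G) ≤ G ∧ G`: the subgroup generated by `x ∧ y` with `[x,y] = 1`. -/
def M0 (G : Type*) [Group G] : Subgroup (ExtSquare G) :=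
  Subgroup.closure { t | ∃ x y : G, x * y = y * x ∧ t = wedge x y }

/-! Let `G` act on `G ⊗ G` by conjugating both factors and let `κ : G ⊗ G → G`,
`g ⊗ h ↦ [g, h]`. The key identity is `s t s⁻¹ = κ(s) • t`; on generators it comes from
expanding `(g a) ⊗ (h b)` with the defining relations in two ways. Hence `x ⊗ y` is central
whenever `[x, y] = 1`, and so is its image `x ∧ y`. For such `x, y` the relations also give
`x ^ n ⊗ y = (x ⊗ y) ^ n`, so `(x ∧ y) ^ exp G = 1`, and a subgroup generated by central
elements killed by `exp G` has exponent dividing `exp G`. -/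

open scoped commutatorElement

namespace TensorSquare

variable {G : Type*} [Group G]

theorem hom_ext {H : Type*} [Group H] {φ ψ : TensorSquare G →* H}
    (h : ∀ a b : G, φ (tensorOf a b) = ψ (tensorOf a b)) : φ = ψ :=
  PresentedGroup.ext fun p => h p.1 p.2

theorem tensorOf_mul_left_conj (g g' h : G) :
    tensorOf (g * g') h = tensorOf (g * g' * g⁻¹) (g * h * g⁻¹) * tensorOf g h :=
  (PresentedGroup.mk_eq_mk_of_mul_inv_mem (Or.inl ⟨g, g', h, rfl⟩)).trans (map_mul _ _ _)

theorem tensorOf_mul_right_conj (g h h' : G) :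
    tensorOf g (h * h') = tensorOf g h * tensorOf (h * g * h⁻¹) (h * h' * h⁻¹) :=
  (PresentedGroup.mk_eq_mk_of_mul_inv_mem (Or.inr ⟨g, h, h', rfl⟩)).trans (map_mul _ _ _)

def conjHom (g : G) : TensorSquare G →* TensorSquare G :=
  PresentedGroup.toGroup
      (f := fun p : G × G => tensorOf (g * p.1 * g⁻¹) (g * p.2 * g⁻¹)) <| by
    rintro r (⟨x, y, h, rfl⟩ | ⟨x, y, h, rfl⟩) <;>
      simp only [map_mul, map_inv, FreeGroup.lift_apply_of, mul_inv_eq_one]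
    · rw [show g * (x * y) * g⁻¹ = (g * x * g⁻¹) * (g * y * g⁻¹) by group,
        tensorOf_mul_left_conj]
      congr 2 <;> group
    · rw [show g * (y * h) * g⁻¹ = (g * y * g⁻¹) * (g * h * g⁻¹) by group,
        tensorOf_mul_right_conj]
      congr 2 <;> group

theorem conjHom_tensorOf (g a b : G) :
    conjHom g (tensorOf a b) = tensorOf (g * a * g⁻¹) (g * b * g⁻¹) :=
  PresentedGroup.toGroup.of _

instance : MulDistribMulAction G (TensorSquare G) where
  smul g := conjHom g
  one_smul t := by
    change conjHom 1 t = MonoidHom.id _ t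
    congr 1
    exact hom_ext fun a b => by simp [conjHom_tensorOf]
  mul_smul g g' t := by
    change conjHom (g * g') t = (conjHom g).comp (conjHom g') t
    congr 1
    exact hom_ext fun a b => by
      simp only [conjHom_tensorOf, MonoidHom.comp_apply]
      congr 1 <;> group
  smul_one g := map_one (conjHom g)
  smul_mul g := map_mul (conjHom g)

theorem smul_tensorOf (g a b : G) :
    g • tensorOf a b = tensorOf (g * a * g⁻¹) (g * b * g⁻¹) :=
  conjHom_tensorOf g a b

theorem tensorOf_mul_left (x y z : G) :
    tensorOf (x * y) z = x • tensorOf y z * tensorOf x z := by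
  rw [smul_tensorOf]; exact tensorOf_mul_left_conj x y z

theorem tensorOf_mul_right (x y z : G) :
    tensorOf x (y * z) = tensorOf x y * y • tensorOf x z := by
  rw [smul_tensorOf]; exact tensorOf_mul_right_conj x y z

theorem smul_smul_tensorOf_mul_tensorOf (g h a b : G) :
    g • h • tensorOf a b * tensorOf g h = tensorOf g h * h • g • tensorOf a b := by
  have expand_left : tensorOf (g * a) (h * b) =
      g • tensorOf a h * (g • h • tensorOf a b * tensorOf g h) * h • tensorOf g b := by
    rw [tensorOf_mul_left, tensorOf_mul_right, tensorOf_mul_right, smul_mul']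
    group
  have expand_right : tensorOf (g * a) (h * b) =
      g • tensorOf a h * (tensorOf g h * h • g • tensorOf a b) * h • tensorOf g b := by
    rw [tensorOf_mul_right, tensorOf_mul_left, tensorOf_mul_left, smul_mul']
    group
  exact mul_left_cancel (mul_right_cancel (expand_left.symm.trans expand_right))

def commutatorHom : TensorSquare G →* G :=
  PresentedGroup.toGroup (f := fun p : G × G => ⁅p.1, p.2⁆) <| by
    rintro r (⟨x, y, h, rfl⟩ | ⟨x, y, h, rfl⟩) <;>
      simp only [map_mul, map_inv, FreeGroup.lift_apply_of, commutatorElement_def] <;> group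

theorem commutatorHom_tensorOf (g h : G) : commutatorHom (tensorOf g h) = ⁅g, h⁆ :=
  PresentedGroup.toGroup.of _

theorem tensorOf_mul_tensorOf_mul_inv (g h a b : G) :
    tensorOf g h * tensorOf a b * (tensorOf g h)⁻¹ = ⁅g, h⁆ • tensorOf a b := by
  have key :=
    smul_smul_tensorOf_mul_tensorOf g h ((h * g)⁻¹ * a * (h * g)) ((h * g)⁻¹ * b * (h * g))
  have hpull : tensorOf ((h * g)⁻¹ * a * (h * g)) ((h * g)⁻¹ * b * (h * g)) =
      (h * g)⁻¹ • tensorOf a b := by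
    rw [smul_tensorOf]; congr 1 <;> group
  have hcomm : g * h * (h * g)⁻¹ = ⁅g, h⁆ := by rw [commutatorElement_def]; group
  rw [hpull, smul_smul h g, smul_smul (h * g), mul_inv_cancel, one_smul, smul_smul g h,
    smul_smul (g * h), hcomm] at key
  rw [← key, mul_inv_cancel_right]

theorem conj_eq_smul_commutatorHom (s t : TensorSquare G) :
    s * t * s⁻¹ = commutatorHom s • t := by
  have : (MulAut.conj : TensorSquare G →* MulAut (TensorSquare G)) =
      (MulDistribMulAction.toMulAut G (TensorSquare G)).comp commutatorHom := by
    refine hom_ext fun g h => MulEquiv.toMonoidHom_injective (hom_ext fun a b => ?_)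
    simp only [MulEquiv.coe_toMonoidHom, MulAut.conj_apply, MonoidHom.comp_apply,
      commutatorHom_tensorOf, MulDistribMulAction.toMulAut_apply,
      MulDistribMulAction.toMulEquiv_apply]
    exact tensorOf_mul_tensorOf_mul_inv g h a b
  exact DFunLike.congr_fun (DFunLike.congr_fun this s) t

theorem mem_center_of_commutatorHom_eq_one {s : TensorSquare G} (hs : commutatorHom s = 1) :
    s ∈ Subgroup.center (TensorSquare G) :=
  Subgroup.mem_center_iff.mpr fun t => by
    rw [eq_comm, ← mul_inv_eq_iff_eq_mul, conj_eq_smul_commutatorHom, hs, one_smul]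

theorem tensorOf_one_left (y : G) : tensorOf (1 : G) y = 1 := by
  simpa using tensorOf_mul_left (1 : G) 1 y

theorem tensorOf_pow_left {x y : G} (h : Commute x y) (n : ℕ) :
    tensorOf (x ^ n) y = tensorOf x y ^ n := by
  induction n with
  | zero => rw [pow_zero, pow_zero, tensorOf_one_left]
  | succ n ih =>
    rw [pow_succ', tensorOf_mul_left, smul_tensorOf, (Commute.self_pow x n).eq, h.eq,
      mul_inv_cancel_right, mul_inv_cancel_right, ih, pow_succ]

end TensorSquare

theorem Subgroup.map_center_le_center_of_surjective {M N : Type*} [Group M] [Group N]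
    {f : M →* N} (hf : Function.Surjective f) :
    (Subgroup.center M).map f ≤ Subgroup.center N := by
  rintro _ ⟨s, hs, rfl⟩
  refine Subgroup.mem_center_iff.mpr fun n => ?_
  obtain ⟨m, rfl⟩ := hf n
  rw [← map_mul, ← map_mul, Subgroup.mem_center_iff.mp hs m]

namespace ExtSquare

variable {G : Type*} [Group G]

variable (G) in
def proj : TensorSquare G →* ExtSquare G :=
  QuotientGroup.mk' (Subgroup.normalClosure (nablaSet G))

theorem proj_surjective : Function.Surjective (proj G) :=
  QuotientGroup.mk'_surjective _

theorem proj_tensorOf (x y : G) : proj G (tensorOf x y) = wedge x y := rfl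

end ExtSquare

open ExtSquare TensorSquare

theorem wedge_mem_center {G : Type*} [Group G] {x y : G} (h : Commute x y) :
    wedge x y ∈ Subgroup.center (ExtSquare G) :=
  Subgroup.map_center_le_center_of_surjective proj_surjective
    ⟨tensorOf x y, mem_center_of_commutatorHom_eq_one <| by
      rw [commutatorHom_tensorOf, commutatorElement_eq_one_iff_mul_comm]; exact h, rfl⟩

theorem wedge_pow_exponent {G : Type*} [Group G] {x y : G} (h : Commute x y) :
    wedge x y ^ Monoid.exponent G = 1 := by
  rw [← proj_tensorOf, ← map_pow, ← tensorOf_pow_left h, Monoid.pow_exponent_eq_one,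
    tensorOf_one_left, map_one]

theorem Subgroup.exponent_closure_dvd_of_subset_center {M : Type*} [Group M] {S : Set M}
    (hS : S ⊆ Subgroup.center M) {n : ℕ} (hn : ∀ s ∈ S, s ^ n = 1) :
    Monoid.exponent (Subgroup.closure S) ∣ n := by
  have hcenter : Subgroup.closure S ≤ Subgroup.center M := (Subgroup.closure_le _).mpr hS
  refine Monoid.exponent_dvd_iff_forall_pow_eq_one.mpr fun ⟨t, ht⟩ => Subtype.ext ?_
  change t ^ n = 1
  induction ht using Subgroup.closure_induction with
  | mem s hs => exact hn s hs
  | one => exact one_pow n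
  | mul a b ha _ ha' hb' =>
    rw [(Commute.symm (Subgroup.mem_center_iff.mp (hcenter ha) b)).mul_pow, ha', hb', one_mul]
  | inv a _ ha' => rw [inv_pow, ha', inv_one]

/-- `M₀(G)` is contained in the center of `G ∧ G`, is abelian, and its exponent
divides `exp G` when `G` is finite. -/
theorem M0_central_abelian_exponent (G : Type*) [Group G] :
    M0 G ≤ Subgroup.center (ExtSquare G) ∧
      (∀ a b : ExtSquare G, a ∈ M0 G → b ∈ M0 G → a * b = b * a) ∧
      (Finite G → Monoid.exponent (M0 G) ∣ Monoid.exponent G) := by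
  have hgen_center : { t | ∃ x y : G, x * y = y * x ∧ t = wedge x y } ⊆
      Subgroup.center (ExtSquare G) := by
    rintro _ ⟨x, y, hxy, rfl⟩
    exact wedge_mem_center hxy
  have hcenter : M0 G ≤ Subgroup.center (ExtSquare G) := (Subgroup.closure_le _).mpr hgen_center
  refine ⟨hcenter, fun a b ha _ => (Subgroup.mem_center_iff.mp (hcenter ha) b).symm,
    fun _ => ?_⟩
  refine Subgroup.exponent_closure_dvd_of_subset_center hgen_center ?_
  rintro _ ⟨x, y, hxy, rfl⟩
  exact wedge_pow_exponent hxy
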